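/- In the Samelson setup, let I be a subset of the simple roots, let Δ_I ⊆ Δ⁺ be the set of positive roots supported on I, and set 𝔥_I := 𝔥 ⊕ ⨁_{α ∈ Δ_I} (𝔤_α ⊕ 𝔤_{−α}) and 𝔭 := ⨁_{α ∈ Δ⁺ \ Δ_I} (𝔤_α ⊕ 𝔤_{−α}). Then the Bismut torsion satisfies T(X, JY, JZ) = T(X, Y, Z) for all X ∈ 𝔥_I and Y, Z ∈ 𝔭. (This is the algebraic claim showing that the complex structure projects to the base of the submersion G → G/H_I.) -/

import Mathlib

/-- The Samelson setup: a finite-dimensional complex semisimple Lie algebra `L` with a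
Cartan subalgebra `H`, root system `Δ` (with values in an additive group `R` of weights),
a choice of positive roots `pos` with simple roots, root spaces, the decomposition into
simple ideals, the left-invariant metric `G` determined by constants `lam i > 0` and
`c α > 0`, a Samelson complex structure `J`, and the Killing form `killingForm ℂ L`. -/
structure SamelsonSetup (R L : Type) [AddCommGroup R] [LieRing L] [LieAlgebra ℂ L] where
  finiteDim : FiniteDimensional ℂ L
  semisimple : LieAlgebra.IsSemisimple ℂ L
  /-- the Cartan subalgebra 𝔥 -/
  H : LieSubalgebra ℂ L
  cartan : H.IsCartanSubalgebra
  /-- the root system Δ ⊆ 𝔥* -/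
  Δ : Set R
  /-- the positive roots Δ⁺ -/
  pos : Set R
  Δ_finite : Δ.Finite
  pos_subset : pos ⊆ Δ
  zero_not_mem : (0 : R) ∉ Δ
  neg_mem : ∀ a ∈ Δ, -a ∈ Δ
  pos_or_neg : ∀ a ∈ Δ, a ∈ pos ∨ -a ∈ pos
  not_pos_and_neg : ∀ a ∈ pos, -a ∉ pos
  /-- the number of simple roots (= rank) -/
  r : ℕ
  /-- the simple roots α₁, …, α_r -/
  simple : Fin r → R
  simple_mem : ∀ j, simple j ∈ pos
  /-- the coefficients of a positive root as an ℕ-linear combination of simple roots -/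
  coeff : R → Fin r → ℕ
  coeff_spec : ∀ a ∈ pos, a = ∑ j, coeff a j • simple j
  coeff_unique : ∀ a ∈ pos, ∀ k : Fin r → ℕ, a = ∑ j, k j • simple j → k = coeff a
  descent : ∀ a ∈ pos, (∀ j, a ≠ simple j) → ∃ j, ∃ b ∈ pos, a = simple j + b
  /-- the root spaces 𝔤_α (with 𝔤₀ = 𝔥) -/
  rootSpace : R → Submodule ℂ L
  rootSpace_zero : rootSpace 0 = H.toSubmodule
  rootSpace_eq_bot : ∀ a : R, a ≠ 0 → a ∉ Δ → rootSpace a = ⊥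
  bracket_mem : ∀ (a b : R), ∀ X ∈ rootSpace a, ∀ Y ∈ rootSpace b, ⁅X, Y⁆ ∈ rootSpace (a + b)
  rootSpace_sup : (⨆ a ∈ insert (0 : R) Δ, rootSpace a) = ⊤
  rootSpace_indep : iSupIndep fun a : ↥(insert (0 : R) Δ) => rootSpace a.1
  /-- the number of simple ideals -/
  s : ℕ
  /-- the simple ideals 𝔤₁, …, 𝔤_s -/
  ideal : Fin s → LieIdeal ℂ L
  ideal_simple : ∀ i, LieAlgebra.IsSimple ℂ (ideal i)
  ideal_sup : (⨆ i, ideal i) = ⊤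
  ideal_indep : iSupIndep ideal
  /-- the simple ideal a root belongs to -/
  idealOf : R → Fin s
  idealOf_neg : ∀ a, idealOf (-a) = idealOf a
  rootSpace_le_ideal : ∀ a ∈ Δ, ∀ X ∈ rootSpace a, X ∈ ideal (idealOf a)
  /-- the positive constants λᵢ -/
  lam : Fin s → ℝ
  lam_pos : ∀ i, 0 < lam i
  /-- the positive constants c_α, with c_{-α} = c_α -/
  c : R → ℝ
  c_pos : ∀ a ∈ Δ, 0 < c a
  c_neg : ∀ a : R, c (-a) = c a
  /-- the metric g -/
  G : LinearMap.BilinForm ℂ L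
  G_symm : ∀ X Y, G X Y = G Y X
  G_H : ∀ i : Fin s, ∀ X Y : L, X ∈ H → X ∈ ideal i → Y ∈ H → Y ∈ ideal i →
    G X Y = -(lam i : ℂ) * killingForm ℂ L X Y
  G_root : ∀ a ∈ Δ, ∀ X ∈ rootSpace a, ∀ Y ∈ rootSpace (-a),
    G X Y = -(lam (idealOf a) : ℂ) * (c a : ℂ) * killingForm ℂ L X Y
  G_roots_ne : ∀ a ∈ Δ, ∀ b ∈ Δ, a + b ≠ 0 →
    ∀ X ∈ rootSpace a, ∀ Y ∈ rootSpace b, G X Y = 0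
  G_H_root : ∀ a ∈ Δ, ∀ X ∈ H, ∀ Y ∈ rootSpace a, G X Y = 0
  G_ideal_ne : ∀ i j : Fin s, i ≠ j → ∀ X ∈ ideal i, ∀ Y ∈ ideal j, G X Y = 0
  /-- the Samelson complex structure J -/
  J : L →ₗ[ℂ] L
  J_H : ∀ X ∈ H, J X ∈ H
  J_J_H : ∀ X ∈ H, J (J X) = -X
  J_pos : ∀ a ∈ pos, ∀ X ∈ rootSpace a, J X = Complex.I • X
  J_neg : ∀ a ∈ pos, ∀ X ∈ rootSpace (-a), J X = -(Complex.I • X)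

namespace SamelsonSetup

variable {R L : Type} [AddCommGroup R] [LieRing L] [LieAlgebra ℂ L]

/-- The Nomizu form of the Bismut connection:
Φ(X,Y,Z) = ½( g([X,Y],Z) + g([Z,X],Y) − g([Y,Z],X)
            − g([JX,JY],Z) − g([JZ,JX],Y) − g([JY,JZ],X) ). -/
noncomputable def Phi (S : SamelsonSetup R L) (X Y Z : L) : ℂ :=
  (1 / 2 : ℂ) * (S.G ⁅X, Y⁆ Z + S.G ⁅Z, X⁆ Y - S.G ⁅Y, Z⁆ X
    - S.G ⁅S.J X, S.J Y⁆ Z - S.G ⁅S.J Z, S.J X⁆ Y - S.G ⁅S.J Y, S.J Z⁆ X)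

/-- The Bismut torsion: T(X,Y,Z) = −g([JX,JY],Z) − g([JY,JZ],X) − g([JZ,JX],Y). -/
noncomputable def T (S : SamelsonSetup R L) (X Y Z : L) : ℂ :=
  -S.G ⁅S.J X, S.J Y⁆ Z - S.G ⁅S.J Y, S.J Z⁆ X - S.G ⁅S.J Z, S.J X⁆ Y

end SamelsonSetup

namespace SamelsonSetup

variable {R L : Type} [AddCommGroup R] [LieRing L] [LieAlgebra ℂ L]

/-- The set Δ_I of positive roots supported on a set `I` of simple roots. -/
def DeltaI (S : SamelsonSetup R L) (I : Set (Fin S.r)) : Set R :=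
  {a | a ∈ S.pos ∧ ∀ j ∉ I, S.coeff a j = 0}

/-- The subalgebra 𝔥_I = 𝔥 ⊕ ⨁_{α ∈ Δ_I} (𝔤_α ⊕ 𝔤_{−α}), as a subspace of 𝔤. -/
def hI (S : SamelsonSetup R L) (I : Set (Fin S.r)) : Submodule ℂ L :=
  S.H.toSubmodule ⊔ ⨆ a ∈ S.DeltaI I, (S.rootSpace a ⊔ S.rootSpace (-a))

/-- The complement 𝔭 = ⨁_{α ∈ Δ⁺ \ Δ_I} (𝔤_α ⊕ 𝔤_{−α}), as a subspace of 𝔤. -/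
def pI (S : SamelsonSetup R L) (I : Set (Fin S.r)) : Submodule ℂ L :=
  ⨆ a ∈ S.pos \ S.DeltaI I, (S.rootSpace a ⊔ S.rootSpace (-a))

end SamelsonSetup

/-!
The torsion is trilinear, so it suffices to take `X ∈ 𝔤_δ` with `δ ∈ {0} ∪ ±Δ_I` and
`Y ∈ 𝔤_β`, `Z ∈ 𝔤_γ` with `β, γ ∈ ±(Δ⁺ \ Δ_I)`; `J` acts on `𝔤_β` by `±i`. If `β` and `γ` have
opposite signs, `J Y` and `J Z` are `Y` and `Z` scaled by `i` and `-i`, whose product is `1`. If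
they have the same sign, then `δ + β + γ ≠ 0`: a sum of positive roots is never zero, and `β + γ`
is not in `Δ_I` because `β` has a nonzero coefficient outside `I`. Since `g` pairs `𝔤_a` with
`𝔤_b` only when `a + b = 0`, every term of both `T(X, JY, JZ)` and `T(X, Y, Z)` then vanishes.
-/

namespace LinearMap

variable {R M N P Q : Type*} [CommSemiring R] [AddCommMonoid M] [AddCommMonoid N]
  [AddCommMonoid P] [AddCommMonoid Q] [Module R M] [Module R N] [Module R P] [Module R Q]
  {ι κ μ : Sort*}

theorem eq_of_mem_iSup {f g : M →ₗ[R] Q} {A : ι → Submodule R M}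
    (h : ∀ i, ∀ x ∈ A i, f x = g x) {x : M} (hx : x ∈ ⨆ i, A i) : f x = g x :=
  (iSup_le fun i x hx => h i x hx : ⨆ i, A i ≤ eqLocus f g) hx

theorem apply₃_eq_of_mem_iSup {f g : M →ₗ[R] N →ₗ[R] P →ₗ[R] Q}
    {A : ι → Submodule R M} {B : κ → Submodule R N} {C : μ → Submodule R P}
    (h : ∀ i j k, ∀ x ∈ A i, ∀ y ∈ B j, ∀ z ∈ C k, f x y z = g x y z)
    {x : M} {y : N} {z : P} (hx : x ∈ ⨆ i, A i) (hy : y ∈ ⨆ j, B j) (hz : z ∈ ⨆ k, C k) :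
    f x y z = g x y z := by
  have hxy : ∀ i j, ∀ x ∈ A i, ∀ y ∈ B j, f x y z = g x y z := fun i j x hx y hy =>
    eq_of_mem_iSup (fun k z hz => h i j k x hx y hy z hz) hz
  have hx' : ∀ i, ∀ x ∈ A i, f x y z = g x y z := fun i x hx =>
    eq_of_mem_iSup (f := (f x).flip z) (g := (g x).flip z)
      (fun j y hy => hxy i j x hx y hy) hy
  exact eq_of_mem_iSup (f := (f.flip y).flip z) (g := (g.flip y).flip z) hx' hx

end LinearMap

namespace SamelsonSetup

variable {R L : Type} [AddCommGroup R] [LieRing L] [LieAlgebra ℂ L] (S : SamelsonSetup R L)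

section Roots

lemma eq_zero_of_sum_smul_simple_eq_zero {m : Fin S.r → ℕ}
    (h : ∑ j, m j • S.simple j = 0) : m = 0 := by
  classical
  funext j₀
  have h₁ : S.simple j₀ = ∑ j, (Pi.single j₀ 1 : Fin S.r → ℕ) j • S.simple j := by
    simp [Pi.single_apply, ite_smul]
  have h₂ : S.simple j₀ = ∑ j, ((Pi.single j₀ 1 : Fin S.r → ℕ) + m) j • S.simple j := by
    simp only [Pi.add_apply, add_smul, Finset.sum_add_distrib, h, add_zero, ← h₁]
  have := congrFun ((S.coeff_unique _ (S.simple_mem j₀) _ h₂).trans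
    (S.coeff_unique _ (S.simple_mem j₀) _ h₁).symm) j₀
  simpa using this

lemma coeff_ne_zero {a : R} (ha : a ∈ S.pos) : S.coeff a ≠ 0 := by
  intro h
  have ha0 : a = 0 := by
    rw [S.coeff_spec a ha, h]
    simp
  exact S.zero_not_mem (ha0 ▸ S.pos_subset ha)

lemma add_add_ne_zero {a b c : R} (ha : a ∈ S.pos) (hb : b ∈ S.pos) (hc : c ∈ S.pos) :
    a + b + c ≠ 0 := by
  intro h
  have hsum : ∑ j, (S.coeff a + S.coeff b + S.coeff c) j • S.simple j = 0 := by
    simp only [Pi.add_apply, add_smul, Finset.sum_add_distrib, ← S.coeff_spec a ha,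
      ← S.coeff_spec b hb, ← S.coeff_spec c hc, h]
  exact S.coeff_ne_zero ha
    (add_eq_zero.1 (add_eq_zero.1 (S.eq_zero_of_sum_smul_simple_eq_zero hsum)).1).1

variable (I : Set (Fin S.r))

def hIRoots : Set R := {d | d = 0 ∨ d ∈ S.DeltaI I ∨ -d ∈ S.DeltaI I}

def pIRoots : Set R := {a | a ∈ S.pos \ S.DeltaI I ∨ -a ∈ S.pos \ S.DeltaI I}

variable {S I}

lemma neg_mem_hIRoots {d : R} (hd : d ∈ S.hIRoots I) : -d ∈ S.hIRoots I := by
  rcases hd with rfl | hd | hd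
  · exact Or.inl neg_zero
  · exact Or.inr (Or.inr (by rwa [neg_neg]))
  · exact Or.inr (Or.inl hd)

lemma add_ne_of_mem_DeltaI {b c d : R} (hb : b ∈ S.pos \ S.DeltaI I)
    (hc : c ∈ S.pos \ S.DeltaI I) (hd : d ∈ S.DeltaI I) : b + c ≠ d := by
  intro h
  obtain ⟨j, hjI, hbj⟩ : ∃ j ∉ I, S.coeff b j ≠ 0 := by
    by_contra! hb'
    exact hb.2 ⟨hb.1, hb'⟩
  have hsum : d = ∑ j, (S.coeff b + S.coeff c) j • S.simple j := by
    simp only [Pi.add_apply, add_smul, Finset.sum_add_distrib, ← S.coeff_spec b hb.1,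
      ← S.coeff_spec c hc.1, h]
  have := congrFun (S.coeff_unique d hd.1 _ hsum) j
  simp only [Pi.add_apply, hd.2 j hjI] at this
  omega

lemma add_add_ne_zero_of_mem_hIRoots {d b c : R} (hd : d ∈ S.hIRoots I)
    (hb : b ∈ S.pos \ S.DeltaI I) (hc : c ∈ S.pos \ S.DeltaI I) : d + b + c ≠ 0 := by
  intro h
  rcases hd with rfl | hd | hd
  · rw [zero_add] at h
    exact S.not_pos_and_neg b hb.1 (neg_eq_of_add_eq_zero_right h ▸ hc.1)
  · exact S.add_add_ne_zero hd.1 hb.1 hc.1 h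
  · exact add_ne_of_mem_DeltaI hb hc hd (by rw [← neg_eq_of_add_eq_zero_right h]; abel)

end Roots

section RootSpaces

lemma eq_zero_or_mem_or_rootSpace_eq_bot (a : R) : a = 0 ∨ a ∈ S.Δ ∨ S.rootSpace a = ⊥ :=
  or_iff_not_imp_left.2 fun h0 => or_iff_not_imp_left.2 (S.rootSpace_eq_bot a h0)

variable {S}

lemma G_eq_zero_of_add_ne_zero {a b : R} {X Y : L} (hX : X ∈ S.rootSpace a)
    (hY : Y ∈ S.rootSpace b) (hab : a + b ≠ 0) : S.G X Y = 0 := by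
  rcases S.eq_zero_or_mem_or_rootSpace_eq_bot b with rfl | hb | hb
  · rcases S.eq_zero_or_mem_or_rootSpace_eq_bot a with rfl | ha | ha
    · exact absurd (add_zero 0) hab
    · rw [S.rootSpace_zero] at hY
      rw [S.G_symm]
      exact S.G_H_root a ha Y hY X hX
    · simp_all
  · rcases S.eq_zero_or_mem_or_rootSpace_eq_bot a with rfl | ha | ha
    · rw [S.rootSpace_zero] at hX
      exact S.G_H_root b hb X hX Y hY
    · exact S.G_roots_ne a ha b hb hab X hX Y hY
    · simp_all
  · simp_all

lemma J_apply_of_neg_mem_pos {a : R} (ha : -a ∈ S.pos) {W : L} (hW : W ∈ S.rootSpace a) :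
    S.J W = -(Complex.I • W) :=
  S.J_neg (-a) ha W (by rwa [neg_neg])

lemma J_mem_rootSpace {a : R} {W : L} (hW : W ∈ S.rootSpace a) : S.J W ∈ S.rootSpace a := by
  rcases S.eq_zero_or_mem_or_rootSpace_eq_bot a with rfl | ha | ha
  · rw [S.rootSpace_zero] at hW ⊢
    exact S.J_H W hW
  · rcases S.pos_or_neg a ha with ha | ha
    · rw [S.J_pos a ha W hW]
      exact Submodule.smul_mem _ _ hW
    · rw [J_apply_of_neg_mem_pos ha hW]
      exact Submodule.neg_mem _ (Submodule.smul_mem _ _ hW)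
  · simp_all

end RootSpaces

section Torsion

noncomputable def torsionₗ : L →ₗ[ℂ] L →ₗ[ℂ] L →ₗ[ℂ] ℂ :=
  LinearMap.mk₂ ℂ
    (fun X Y =>
      { toFun := S.T X Y
        map_add' := by intros; simp [T, lie_add, add_lie]; ring
        map_smul' := by intros; simp [T]; ring })
    (by intros; ext; simp [T, lie_add, add_lie]; ring)
    (by intros; ext; simp [T]; ring)
    (by intros; ext; simp [T, lie_add, add_lie]; ring)
    (by intros; ext; simp [T]; ring)

@[simp]
lemma torsionₗ_apply (X Y Z : L) : S.torsionₗ X Y Z = S.T X Y Z := rfl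

variable {S}

lemma T_smul_smul (s t : ℂ) (X Y Z : L) : S.T X (s • Y) (t • Z) = s * t * S.T X Y Z := by
  simp only [← torsionₗ_apply, map_smul, LinearMap.smul_apply, smul_eq_mul]
  ring

lemma T_eq_zero_of_add_add_ne_zero {d a b : R} {X Y Z : L} (hX : X ∈ S.rootSpace d)
    (hY : Y ∈ S.rootSpace a) (hZ : Z ∈ S.rootSpace b) (h : d + a + b ≠ 0) :
    S.T X Y Z = 0 := by
  have hJX := J_mem_rootSpace hX
  have hJY := J_mem_rootSpace hY
  have hJZ := J_mem_rootSpace hZ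
  rw [T, G_eq_zero_of_add_ne_zero (S.bracket_mem _ _ _ hJX _ hJY) hZ h,
    G_eq_zero_of_add_ne_zero (S.bracket_mem _ _ _ hJY _ hJZ) hX (by convert h using 1; abel),
    G_eq_zero_of_add_ne_zero (S.bracket_mem _ _ _ hJZ _ hJX) hY (by convert h using 1; abel)]
  ring

variable {I : Set (Fin S.r)}

lemma T_J_J_eq_of_mem_rootSpace {d a b : R} (hd : d ∈ S.hIRoots I) (ha : a ∈ S.pIRoots I)
    (hb : b ∈ S.pIRoots I) {X Y Z : L} (hX : X ∈ S.rootSpace d) (hY : Y ∈ S.rootSpace a)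
    (hZ : Z ∈ S.rootSpace b) : S.T X (S.J Y) (S.J Z) = S.T X Y Z := by
  rcases ha with ha | ha <;> rcases hb with hb | hb
  · have h := add_add_ne_zero_of_mem_hIRoots hd ha hb
    rw [T_eq_zero_of_add_add_ne_zero hX (J_mem_rootSpace hY) (J_mem_rootSpace hZ) h,
      T_eq_zero_of_add_add_ne_zero hX hY hZ h]
  · rw [S.J_pos a ha.1 Y hY, J_apply_of_neg_mem_pos hb.1 hZ, ← neg_smul, T_smul_smul]
    simp
  · rw [J_apply_of_neg_mem_pos ha.1 hY, S.J_pos b hb.1 Z hZ, ← neg_smul, T_smul_smul]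
    simp
  · have h : d + a + b ≠ 0 := fun h => add_add_ne_zero_of_mem_hIRoots (neg_mem_hIRoots hd) ha hb
      (by rw [← neg_add, ← neg_add, h, neg_zero])
    rw [T_eq_zero_of_add_add_ne_zero hX (J_mem_rootSpace hY) (J_mem_rootSpace hZ) h,
      T_eq_zero_of_add_add_ne_zero hX hY hZ h]

end Torsion

variable {S} {I : Set (Fin S.r)}

lemma hI_le_iSup_rootSpace : S.hI I ≤ ⨆ d : S.hIRoots I, S.rootSpace d :=
  sup_le (S.rootSpace_zero ▸ le_iSup_of_le ⟨0, Or.inl rfl⟩ le_rfl) <|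
    iSup₂_le fun a ha => sup_le (le_iSup_of_le ⟨a, Or.inr (Or.inl ha)⟩ le_rfl)
      (le_iSup_of_le ⟨-a, Or.inr (Or.inr (by rwa [neg_neg]))⟩ le_rfl)

lemma pI_le_iSup_rootSpace : S.pI I ≤ ⨆ a : S.pIRoots I, S.rootSpace a :=
  iSup₂_le fun a ha => sup_le (le_iSup_of_le ⟨a, Or.inl ha⟩ le_rfl)
    (le_iSup_of_le ⟨-a, Or.inr (by rwa [neg_neg])⟩ le_rfl)

end SamelsonSetup

/-- For any subset I of the simple roots, the Bismut torsion satisfies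
T(X, JY, JZ) = T(X, Y, Z) for all X ∈ 𝔥_I and Y, Z ∈ 𝔭. -/
theorem bismut_torsion_J_invariant_hI_p_p {R L : Type} [AddCommGroup R] [LieRing L]
    [LieAlgebra ℂ L] (S : SamelsonSetup R L) (I : Set (Fin S.r))
    (X Y Z : L) (hX : X ∈ S.hI I) (hY : Y ∈ S.pI I) (hZ : Z ∈ S.pI I) :
    S.T X (S.J Y) (S.J Z) = S.T X Y Z :=
  LinearMap.apply₃_eq_of_mem_iSup
    (f := (S.torsionₗ.compl₂ S.J).compr₂ (LinearMap.lcomp ℂ ℂ S.J)) (g := S.torsionₗ)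
    (fun d a b _ hX _ hY _ hZ => SamelsonSetup.T_J_J_eq_of_mem_rootSpace d.2 a.2 b.2 hX hY hZ)
    (SamelsonSetup.hI_le_iSup_rootSpace hX) (SamelsonSetup.pI_le_iSup_rootSpace hY)
    (SamelsonSetup.pI_le_iSup_rootSpace hZ)
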